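/- arXiv:1905.07312 — 3 statements merged into one kernel-verified Lean document; each statement's English description precedes it below -/
import Mathlib

section
/- Let α be a positive integer and β > −1 a real number. Then for every n ∈ ℕ₀ and every x ∈ ℝ, ((1−x)/2)^α P_n^{(α,β)}(x) = Σ_{j=0}^{α} (−1)^j a_j^{(0)}(n) P_{n+j}^{(0,β)}(x), where a_j^{(0)}(n) = α! Γ(n+α+1) (2n+2j+β+1) Γ(2n+j+β+1) / ( j! (α−j)! n! Γ(2n+j+α+β+2) ), and each a_j^{(0)}(n) is positive. -/
open Filter Matrix

/-- Jacobi polynomial `P_n^{(α,β)}(x)`. -/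
noncomputable def jacobiP (α β : ℝ) (n : ℕ) (x : ℝ) : ℝ :=
  (1 / (n.factorial : ℝ)) * ∑ k ∈ Finset.range (n + 1),
    (n.choose k : ℝ) * (∏ i ∈ Finset.Icc (k + 1) n, (α + (i : ℝ))) *
      (∏ j ∈ Finset.Icc 1 k, (α + β + (n : ℝ) + (j : ℝ))) * ((x - 1) / 2) ^ k

/-- The coefficient a_j^{(0)}(n) of the expansion into P^{(0,β)} Jacobi polynomials. -/
noncomputable def a0coef (a : ℕ) (β : ℝ) (n j : ℕ) : ℝ :=
  (a.factorial : ℝ) * Real.Gamma ((n : ℝ) + (a : ℝ) + 1) *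
      (2 * (n : ℝ) + 2 * (j : ℝ) + β + 1) * Real.Gamma (2 * (n : ℝ) + (j : ℝ) + β + 1) /
    ((j.factorial : ℝ) * ((a - j).factorial : ℝ) * (n.factorial : ℝ) *
      Real.Gamma (2 * (n : ℝ) + (j : ℝ) + (a : ℝ) + β + 2))

/-
The contiguous relation
  (2n+α+β+2) · ((1-x)/2) · P_n^{(α+1,β)} = (n+α+1) P_n^{(α,β)} - (n+1) P_{n+1}^{(α,β)}
(checked coefficientwise in powers of (x-1)/2) trades one factor (1-x)/2 for a lowering of α
by one. Applying it and inducting on a, the coefficients of P_{n+j}^{(0,β)} obey a Pascal-type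
recurrence in (a, n, j), which is solved by
a_j^{(0)}(n) = C(a,j) (n+1)_a (2n+2j+β+1) / (2n+j+β+1)_{a+1} in Pochhammer form;
for β > -1 every factor is positive.
-/

open Finset
open scoped Nat

section General

variable {R : Type*} [CommSemiring R]

theorem ascPochhammer_succ_eval_left (m : ℕ) (s : R) :
    (ascPochhammer R (m + 1)).eval s = s * (ascPochhammer R m).eval (s + 1) := by
  simp [ascPochhammer_succ_left, Polynomial.eval_comp]

theorem prod_Icc_add_natCast_eq_ascPochhammer_eval (c : R) {a b : ℕ} (hab : a ≤ b) :
    ∏ i ∈ Icc (a + 1) b, (c + i) = (ascPochhammer R (b - a)).eval (c + a + 1) := by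
  obtain ⟨d, rfl⟩ := Nat.exists_eq_add_of_le hab
  rw [Nat.add_sub_cancel_left]
  clear hab
  induction d with
  | zero => simp
  | succ d ih =>
    rw [← add_assoc, prod_Icc_succ_top (by omega), ih, ascPochhammer_succ_eval]
    push_cast
    ring_nf

end General

theorem cast_choose_succ_mul_succ {R : Type*} [CommRing R] (a j : ℕ) :
    (a.choose (j + 1) : R) * (j + 1) = a.choose j * (a - j) := by
  rcases le_or_gt j a with hj | hj
  · rw [← Nat.cast_sub hj]
    exact_mod_cast congrArg (Nat.cast (R := R)) (Nat.choose_succ_right_eq a j)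
  · simp [Nat.choose_eq_zero_of_lt hj, Nat.choose_eq_zero_of_lt (Nat.lt_succ_of_lt hj)]

theorem Real.Gamma_add_natCast {s : ℝ} (hs : 0 < s) (m : ℕ) :
    Real.Gamma (s + m) = (ascPochhammer ℝ m).eval s * Real.Gamma s := by
  induction m with
  | zero => simp
  | succ m ih =>
    rw [Nat.cast_succ, ← add_assoc, Real.Gamma_add_one (by positivity), ih,
      ascPochhammer_succ_eval]
    ring

noncomputable def jacobiCoeff (α β : ℝ) (n k : ℕ) : ℝ :=
  n.choose k * (ascPochhammer ℝ (n - k)).eval (α + k + 1) *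
    (ascPochhammer ℝ k).eval (α + β + n + 1)

theorem jacobiCoeff_eq_zero_of_lt (α β : ℝ) {n k : ℕ} (h : n < k) :
    jacobiCoeff α β n k = 0 := by
  simp [jacobiCoeff, Nat.choose_eq_zero_of_lt h]

theorem jacobiP_eq_sum_jacobiCoeff (α β : ℝ) (n : ℕ) (x : ℝ) :
    jacobiP α β n x =
      (n ! : ℝ)⁻¹ * ∑ k ∈ range (n + 1), jacobiCoeff α β n k * ((x - 1) / 2) ^ k := by
  rw [jacobiP, one_div]
  congr 1
  refine sum_congr rfl fun k hk => ?_
  rw [jacobiCoeff, prod_Icc_add_natCast_eq_ascPochhammer_eval _ (mem_range_succ_iff.mp hk),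
    ← zero_add 1, prod_Icc_add_natCast_eq_ascPochhammer_eval _ k.zero_le]
  simp

theorem jacobiCoeff_zero_succ (α β : ℝ) (n : ℕ) :
    (n + α + 1) * jacobiCoeff α β n 0 = jacobiCoeff α β (n + 1) 0 := by
  simp only [jacobiCoeff, Nat.choose_zero_right, Nat.sub_zero, ascPochhammer_succ_eval,
    ascPochhammer_zero, Polynomial.eval_one]
  push_cast
  ring

theorem jacobiCoeff_contiguous (α β : ℝ) {n k : ℕ} (hk : k ≤ n) :
    -(2 * n + α + β + 2) * jacobiCoeff (α + 1) β n k =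
      (n + α + 1) * jacobiCoeff α β n (k + 1) - jacobiCoeff α β (n + 1) (k + 1) := by
  obtain ⟨d, hd⟩ := Nat.exists_eq_add_of_le hk
  rcases d with _ | d
  · subst hd
    simp only [jacobiCoeff, Nat.choose_succ_self, Nat.choose_self, Nat.sub_self,
      ascPochhammer_zero, Polynomial.eval_one, ascPochhammer_succ_eval]
    push_cast
    ring_nf
  · have hpascal : ((n + 1).choose (k + 1) : ℝ) = n.choose k + n.choose (k + 1) := by
      exact_mod_cast Nat.choose_succ_succ' n k
    set U := (ascPochhammer ℝ d).eval (α + k + 2)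
    set V := (ascPochhammer ℝ k).eval (α + β + n + 2)
    have hnk : (n : ℝ) = k + d + 1 := by rw [hd]; push_cast; ring
    have h₁ : jacobiCoeff (α + 1) β n k = n.choose k * (U * (α + n + 1)) * V := by
      rw [jacobiCoeff, show n - k = d + 1 by omega, ascPochhammer_succ_eval,
        show α + 1 + k + 1 = α + k + 2 by ring,
        show α + 1 + β + n + 1 = α + β + n + 2 by ring,
        show α + k + 2 + d = α + n + 1 by rw [hnk]; ring]
    have h₂ : jacobiCoeff α β n (k + 1) = n.choose (k + 1) * U * ((α + β + n + 1) * V) := by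
      rw [jacobiCoeff, show n - (k + 1) = d by omega, ascPochhammer_succ_eval_left,
        show α + ((k + 1 : ℕ) : ℝ) + 1 = α + k + 2 by push_cast; ring,
        show α + β + n + 1 + 1 = α + β + n + 2 by ring]
    have h₃ : jacobiCoeff α β (n + 1) (k + 1) =
        (n + 1).choose (k + 1) * (U * (α + n + 1)) * (V * (α + β + n + k + 2)) := by
      rw [jacobiCoeff, show n + 1 - (k + 1) = d + 1 by omega, ascPochhammer_succ_eval,
        ascPochhammer_succ_eval,
        show α + ((k + 1 : ℕ) : ℝ) + 1 = α + k + 2 by push_cast; ring,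
        show α + β + ((n + 1 : ℕ) : ℝ) + 1 = α + β + n + 2 by push_cast; ring,
        show α + k + 2 + d = α + n + 1 by rw [hnk]; ring]
      ring
    rw [h₁, h₂, h₃, hpascal]
    linear_combination (U * (α + n + 1) * V) * cast_choose_succ_mul_succ (R := ℝ) n k

theorem jacobiP_contiguous (α β : ℝ) (n : ℕ) (x : ℝ) :
    (2 * n + α + β + 2) * ((1 - x) / 2 * jacobiP (α + 1) β n x) =
      (n + α + 1) * jacobiP α β n x - (n + 1) * jacobiP α β (n + 1) x := by
  set t := (x - 1) / 2
  have hext : ∑ k ∈ range (n + 1 + 1), jacobiCoeff α β n k * t ^ k =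
      ∑ k ∈ range (n + 1), jacobiCoeff α β n k * t ^ k := by
    rw [sum_range_succ, jacobiCoeff_eq_zero_of_lt α β n.lt_succ_self, zero_mul, add_zero]
  have hcoeff :
      -(2 * n + α + β + 2) * t * ∑ k ∈ range (n + 1), jacobiCoeff (α + 1) β n k * t ^ k =
      (n + α + 1) * ∑ k ∈ range (n + 1), jacobiCoeff α β n k * t ^ k -
        ∑ k ∈ range (n + 1 + 1), jacobiCoeff α β (n + 1) k * t ^ k := by
    rw [← hext, mul_sum, mul_sum, ← sum_sub_distrib, sum_range_succ' _ (n + 1), pow_zero,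
      ← mul_assoc, jacobiCoeff_zero_succ, sub_self, add_zero]
    refine sum_congr rfl fun k hk => ?_
    linear_combination t ^ (k + 1) * jacobiCoeff_contiguous α β (mem_range_succ_iff.mp hk)
  rw [jacobiP_eq_sum_jacobiCoeff, jacobiP_eq_sum_jacobiCoeff, jacobiP_eq_sum_jacobiCoeff,
    show (1 - x) / 2 = -t by ring, Nat.factorial_succ]
  push_cast
  field_simp
  linear_combination hcoeff

-- Unlike `a0coef`, whose truncated `(a - j)!` does not vanish, this is `0` for `j > a`.
noncomputable def expansionCoeff (a : ℕ) (β : ℝ) (n j : ℕ) : ℝ :=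
  a.choose j * (ascPochhammer ℝ a).eval ((n : ℝ) + 1) * (2 * n + 2 * j + β + 1) /
    (ascPochhammer ℝ (a + 1)).eval (2 * n + j + β + 1)

theorem expansionCoeff_eq_zero_of_lt (β : ℝ) (n : ℕ) {a j : ℕ} (h : a < j) :
    expansionCoeff a β n j = 0 := by
  simp [expansionCoeff, Nat.choose_eq_zero_of_lt h]

theorem expansionCoeff_succ_zero {β : ℝ} (hβ : -1 < β) (a n : ℕ) :
    (2 * n + a + β + 2) * expansionCoeff (a + 1) β n 0 =
      (n + a + 1) * expansionCoeff a β n 0 := by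
  have hs : 0 < 2 * (n : ℝ) + β + 1 := by linarith [Nat.cast_nonneg (α := ℝ) n]
  simp only [expansionCoeff, Nat.choose_zero_right, Nat.cast_zero, mul_zero, add_zero,
    ascPochhammer_succ_eval (a + 1), ascPochhammer_succ_eval a ((n : ℝ) + 1)]
  push_cast
  field_simp
  ring

theorem expansionCoeff_succ_succ {β : ℝ} (hβ : -1 < β) (a n j : ℕ) :
    (2 * n + a + β + 2) * expansionCoeff (a + 1) β n (j + 1) =
      (n + a + 1) * expansionCoeff a β n (j + 1) + (n + 1) * expansionCoeff a β (n + 1) j := by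
  simp only [expansionCoeff]
  rw [show 2 * (n : ℝ) + ((j + 1 : ℕ) : ℝ) + β + 1 = 2 * n + j + β + 2 by push_cast; ring,
    show 2 * ((n + 1 : ℕ) : ℝ) + j + β + 1 = 2 * n + j + β + 2 + 1 by push_cast; ring,
    show ((n + 1 : ℕ) : ℝ) + 1 = n + 1 + 1 by push_cast; ring]
  set s : ℝ := 2 * n + j + β + 2
  have hs : 0 < s := by linarith [Nat.cast_nonneg (α := ℝ) n, Nat.cast_nonneg (α := ℝ) j]
  set P := (ascPochhammer ℝ (a + 1)).eval s
  set p := (ascPochhammer ℝ a).eval ((n : ℝ) + 1)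
  have hP : P ≠ 0 := (ascPochhammer_pos _ _ hs).ne'
  have hP₂ : (ascPochhammer ℝ (a + 1 + 1)).eval s = P * (s + a + 1) := by
    rw [ascPochhammer_succ_eval]; push_cast; ring
  have hP₁ : (ascPochhammer ℝ (a + 1)).eval (s + 1) = P * (s + a + 1) / s := by
    rw [eq_div_iff hs.ne', ← hP₂, ascPochhammer_succ_eval_left (a + 1) s]; ring
  have hp₁ : (ascPochhammer ℝ (a + 1)).eval ((n : ℝ) + 1) = p * (n + a + 1) := by
    rw [ascPochhammer_succ_eval]; ring
  have hp₂ : (ascPochhammer ℝ a).eval ((n : ℝ) + 1 + 1) = p * (n + a + 1) / (n + 1) := by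
    rw [eq_div_iff (by positivity), ← hp₁, ascPochhammer_succ_eval_left a]; ring
  have hpascal : ((a + 1).choose (j + 1) : ℝ) = a.choose j + a.choose (j + 1) := by
    exact_mod_cast Nat.choose_succ_succ' a j
  have habsorb := cast_choose_succ_mul_succ (R := ℝ) a j
  rw [hP₂, hP₁, hp₁, hp₂, hpascal]
  field_simp
  push_cast
  linear_combination (-(p * (2 * (n + j + 1) + β + 1))) * habsorb

theorem sum_expansionCoeff_succ {β : ℝ} (hβ : -1 < β) (a n : ℕ) (f : ℕ → ℝ) :
    (2 * n + a + β + 2) *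
        ∑ j ∈ range (a + 1 + 1), (-1) ^ j * expansionCoeff (a + 1) β n j * f (n + j) =
      (n + a + 1) * ∑ j ∈ range (a + 1), (-1) ^ j * expansionCoeff a β n j * f (n + j) -
        (n + 1) *
          ∑ j ∈ range (a + 1), (-1) ^ j * expansionCoeff a β (n + 1) j * f (n + 1 + j) := by
  have hext : ∑ j ∈ range (a + 1), (-1) ^ j * expansionCoeff a β n j * f (n + j) =
      ∑ j ∈ range (a + 1 + 1), (-1) ^ j * expansionCoeff a β n j * f (n + j) := by
    rw [sum_range_succ _ (a + 1), expansionCoeff_eq_zero_of_lt β n a.lt_succ_self]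
    ring
  have hterm : ∀ j, (2 * n + a + β + 2) *
      ((-1) ^ (j + 1) * expansionCoeff (a + 1) β n (j + 1) * f (n + (j + 1))) =
      (n + a + 1) * ((-1) ^ (j + 1) * expansionCoeff a β n (j + 1) * f (n + (j + 1))) -
        (n + 1) * ((-1) ^ j * expansionCoeff a β (n + 1) j * f (n + 1 + j)) := by
    intro j
    rw [show n + 1 + j = n + (j + 1) by omega]
    linear_combination (-1) ^ (j + 1) * f (n + (j + 1)) * expansionCoeff_succ_succ hβ a n j
  rw [hext, sum_range_succ' _ (a + 1), sum_range_succ' _ (a + 1), mul_add, mul_add, mul_sum,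
    sum_congr rfl fun j _ => hterm j, sum_sub_distrib, ← mul_sum, ← mul_sum]
  linear_combination f (n + 0) * expansionCoeff_succ_zero hβ a n

theorem pow_mul_jacobiP_eq_sum_expansionCoeff {β : ℝ} (hβ : -1 < β) (a n : ℕ) (x : ℝ) :
    ((1 - x) / 2) ^ a * jacobiP a β n x =
      ∑ j ∈ range (a + 1), (-1) ^ j * expansionCoeff a β n j * jacobiP 0 β (n + j) x := by
  induction a generalizing n with
  | zero =>
    have hs : 2 * (n : ℝ) + β + 1 ≠ 0 := by linarith [Nat.cast_nonneg (α := ℝ) n]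
    simp [expansionCoeff, hs]
  | succ a ih =>
    have hD : 2 * (n : ℝ) + a + β + 2 ≠ 0 := by
      linarith [Nat.cast_nonneg (α := ℝ) n, Nat.cast_nonneg (α := ℝ) a]
    apply mul_left_cancel₀ hD
    rw [sum_expansionCoeff_succ hβ a n (fun m => jacobiP 0 β m x), ← ih, ← ih, Nat.cast_succ]
    linear_combination ((1 - x) / 2) ^ a * jacobiP_contiguous (a : ℝ) β n x

theorem a0coef_eq_expansionCoeff {β : ℝ} (hβ : -1 < β) (n : ℕ) {a j : ℕ} (hj : j ≤ a) :
    a0coef a β n j = expansionCoeff a β n j := by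
  have hs : 0 < 2 * (n : ℝ) + j + β + 1 := by
    linarith [Nat.cast_nonneg (α := ℝ) n, Nat.cast_nonneg (α := ℝ) j]
  have hΓ₁ : Real.Gamma (n + a + 1) = (ascPochhammer ℝ a).eval ((n : ℝ) + 1) * n ! := by
    rw [add_right_comm, Real.Gamma_add_natCast (by positivity), Real.Gamma_nat_eq_factorial]
  have hΓ₂ : Real.Gamma (2 * n + j + a + β + 2) =
      (ascPochhammer ℝ (a + 1)).eval (2 * n + j + β + 1) * Real.Gamma (2 * n + j + β + 1) := by
    rw [← Real.Gamma_add_natCast hs]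
    push_cast
    ring_nf
  have hΓ : Real.Gamma (2 * n + j + β + 1) ≠ 0 := (Real.Gamma_pos_of_pos hs).ne'
  have hP : (ascPochhammer ℝ (a + 1)).eval (2 * n + j + β + 1 : ℝ) ≠ 0 :=
    (ascPochhammer_pos _ _ hs).ne'
  rw [a0coef, expansionCoeff, hΓ₁, hΓ₂, Nat.cast_choose ℝ hj]
  generalize Real.Gamma (2 * n + j + β + 1) = G at hΓ ⊢
  generalize (ascPochhammer ℝ (a + 1)).eval (2 * n + j + β + 1 : ℝ) = P at hP ⊢
  field_simp

theorem expansionCoeff_pos {β : ℝ} (hβ : -1 < β) (n : ℕ) {a j : ℕ} (hj : j ≤ a) :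
    0 < expansionCoeff a β n j := by
  have hs : 0 < 2 * (n : ℝ) + j + β + 1 := by
    linarith [Nat.cast_nonneg (α := ℝ) n, Nat.cast_nonneg (α := ℝ) j]
  have hchoose : (0 : ℝ) < a.choose j := by exact_mod_cast Nat.choose_pos hj
  have hnum : 0 < 2 * (n : ℝ) + 2 * j + β + 1 := by linarith [Nat.cast_nonneg (α := ℝ) j]
  have hp := ascPochhammer_pos a ((n : ℝ) + 1) (by positivity)
  have hP := ascPochhammer_pos (a + 1) _ hs
  unfold expansionCoeff
  positivity

theorem stmt3_general (a : ℕ) (β : ℝ) (hβ : -1 < β) (n : ℕ) (x : ℝ) :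
    (((1 - x) / 2) ^ a * jacobiP (a : ℝ) β n x =
      ∑ j ∈ Finset.range (a + 1), (-1 : ℝ) ^ j * a0coef a β n j * jacobiP 0 β (n + j) x)
    ∧ ∀ j ∈ Finset.range (a + 1), 0 < a0coef a β n j := by
  have hcoef : ∀ j ∈ range (a + 1), a0coef a β n j = expansionCoeff a β n j := fun j hj =>
    a0coef_eq_expansionCoeff hβ n (mem_range_succ_iff.mp hj)
  refine ⟨?_, fun j hj => hcoef j hj ▸ expansionCoeff_pos hβ n (mem_range_succ_iff.mp hj)⟩
  rw [pow_mul_jacobiP_eq_sum_expansionCoeff hβ]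
  exact sum_congr rfl fun j hj => by rw [hcoef j hj]

/-- Expansion of ((1-x)/2)^α P_n^{(α,β)}(x) into the polynomials P_{n+j}^{(0,β)},
with positive coefficients a_j^{(0)}(n), for a positive integer α. -/
theorem stmt3 (a : ℕ) (ha : 1 ≤ a) (β : ℝ) (hβ : -1 < β) (n : ℕ) (x : ℝ) :
    (((1 - x) / 2) ^ a * jacobiP (a : ℝ) β n x =
      ∑ j ∈ Finset.range (a + 1), (-1 : ℝ) ^ j * a0coef a β n j * jacobiP 0 β (n + j) x)
    ∧ ∀ j ∈ Finset.range (a + 1), 0 < a0coef a β n j :=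
  stmt3_general a β hβ n x
end

section
/- Fix a real number β > −1 and an integer n ≥ 1. Then for every θ ∈ [0,π], the limit as the real parameter α → ∞ of P_n^{(α,β)}(cos θ) / P_n^{(α,β)}(1) equals ((1 + cos θ)/2)^n. -/
open Filter

/-!
Since `P_n^{(α,β)}(1) = (α + 1) ⋯ (α + n) / n!`, dividing by it turns the `k`-th coefficient of the
expansion in powers of `(x - 1) / 2` into `C(n,k) ∏_{j ≤ k} (α + β + n + j) / (α + j)`, which tends
to `C(n,k)` as `α → ∞`. The limit is therefore `∑ C(n,k) ((x - 1) / 2)^k = ((1 + x) / 2)^n`.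
-/

open Finset Topology

theorem Finset.prod_Icc_one_mul_prod_Icc_add_one {M : Type*} [CommMonoid M] (f : ℕ → M)
    {k n : ℕ} (hkn : k ≤ n) :
    (∏ i ∈ Icc 1 k, f i) * ∏ i ∈ Icc (k + 1) n, f i = ∏ i ∈ Icc 1 n, f i := by
  simpa only [← Finset.Icc_add_one_left_eq_Ioc, zero_add]
    using prod_Ioc_consecutive f (Nat.zero_le k) hkn

theorem jacobiP_one (α β : ℝ) (n : ℕ) :
    jacobiP α β n 1 = (∏ i ∈ Icc 1 n, (α + i)) / n.factorial := by
  rw [jacobiP, sum_eq_single_of_mem 0 (mem_range.mpr n.succ_pos)]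
  · simp [div_eq_inv_mul]
  · intro k _ hk
    simp [zero_pow hk]

theorem jacobiP_div_jacobiP_one {α : ℝ} (hα : -1 < α) (β x : ℝ) (n : ℕ) :
    jacobiP α β n x / jacobiP α β n 1 = ∑ k ∈ range (n + 1),
      n.choose k * ((x - 1) / 2) ^ k * ∏ j ∈ Icc 1 k, (α + β + n + j) / (α + j) := by
  have hpos : ∀ m k : ℕ, 0 < ∏ i ∈ Icc (m + 1) k, (α + i) := fun m k =>
    prod_pos fun i hi => by
      have : (1 : ℝ) ≤ i := by exact_mod_cast (Nat.le_add_left 1 m).trans (mem_Icc.mp hi).1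
      linarith
  rw [jacobiP_one, jacobiP, div_div_eq_mul_div, one_div_mul_eq_div, div_mul_cancel₀ _
    (Nat.cast_ne_zero.mpr n.factorial_ne_zero), sum_div]
  refine sum_congr rfl fun k hk => ?_
  have hlow := (hpos 0 k).ne'
  have hhigh := (hpos k n).ne'
  rw [← prod_Icc_one_mul_prod_Icc_add_one _ (Nat.lt_succ_iff.mp (mem_range.mp hk)),
    prod_div_distrib]
  field_simp

theorem tendsto_add_div_add_atTop (a b : ℝ) :
    Tendsto (fun t : ℝ => (t + a) / (t + b)) atTop (𝓝 1) := by
  have hsmall : Tendsto (fun t : ℝ => 1 + (a - b) / (t + b)) atTop (𝓝 1) := by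
    simpa using tendsto_const_nhds.add
      (tendsto_const_nhds.div_atTop (tendsto_atTop_add_const_right _ b tendsto_id))
  refine hsmall.congr' ?_
  filter_upwards [eventually_gt_atTop (-b)] with t ht
  have : t + b ≠ 0 := by linarith
  field_simp
  ring

theorem tendsto_jacobiP_div_jacobiP_one (β x : ℝ) (n : ℕ) :
    Tendsto (fun α : ℝ => jacobiP α β n x / jacobiP α β n 1) atTop (𝓝 (((1 + x) / 2) ^ n)) := by
  have hbinom : ((1 + x) / 2) ^ n = ∑ k ∈ range (n + 1), n.choose k * ((x - 1) / 2) ^ k * 1 := by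
    rw [show (1 + x) / 2 = (x - 1) / 2 + 1 by ring, add_pow]
    exact sum_congr rfl fun k _ => by ring
  have hsum : Tendsto (fun α : ℝ => ∑ k ∈ range (n + 1),
      n.choose k * ((x - 1) / 2) ^ k * ∏ j ∈ Icc 1 k, (α + β + n + j) / (α + j)) atTop
      (𝓝 (((1 + x) / 2) ^ n)) := by
    rw [hbinom]
    refine tendsto_finsetSum _ fun k _ => Tendsto.const_mul _ ?_
    have hprod := tendsto_finsetProd (Icc 1 k) fun j _ =>
      tendsto_add_div_add_atTop (β + n + j) (j : ℝ)
    rw [prod_const_one] at hprod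
    simpa only [add_assoc] using hprod
  refine hsum.congr' ?_
  filter_upwards [eventually_gt_atTop (-1)] with α hα
  exact (jacobiP_div_jacobiP_one hα β x n).symm

theorem stmt14_general (β : ℝ) (n : ℕ) (θ : ℝ) :
    Tendsto (fun α : ℝ => jacobiP α β n (Real.cos θ) / jacobiP α β n 1) atTop
      (nhds (((1 + Real.cos θ) / 2) ^ n)) :=
  tendsto_jacobiP_div_jacobiP_one β (Real.cos θ) n

/-- Lemma 2(i): pointwise limit of the normalized Jacobi polynomial as α → ∞. -/
theorem stmt14 (β : ℝ) (hβ : -1 < β) (n : ℕ) (hn : 1 ≤ n) (θ : ℝ)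
    (hθ : θ ∈ Set.Icc (0:ℝ) Real.pi) :
    Tendsto (fun α : ℝ => jacobiP α β n (Real.cos θ) / jacobiP α β n 1) atTop
      (nhds (((1 + Real.cos θ) / 2) ^ n)) :=
  stmt14_general β n θ
end

section
/- Let m ≥ 1 and suppose C(θ) = Σ_{n=0}^∞ B_n (1 + cos θ)^n for θ ∈ [0,π], where each B_n is an m×m positive semidefinite matrix and Σ_{n=0}^∞ 2^n B_n converges entrywise (i.e., C is an isotropic covariance matrix function on all compact two-point homogeneous spaces). Then: (i) C(θ) is a positive semidefinite matrix for each fixed θ ∈ [0,π]; (ii) C(θ₁) − C(θ₂) is positive semidefinite whenever 0 ≤ θ₁ ≤ θ₂ ≤ π; (iii) for every θ ∈ (0,π) at which C is (entrywise) differentiable, −C′(θ) is positive semidefinite. -/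
open Filter Matrix

/-- Positive semidefiniteness in the quadratic-form sense. -/
def PSD {m : ℕ} (A : Matrix (Fin m) (Fin m) ℝ) : Prop :=
  ∀ v : Fin m → ℝ, 0 ≤ v ⬝ᵥ A.mulVec v

/-- The series `Σ_{n=0}^∞ f n` converges (partial sums) to `L`. -/
def SeriesTo (f : ℕ → ℝ) (L : ℝ) : Prop :=
  Filter.Tendsto (fun N => ∑ n ∈ Finset.range N, f n) Filter.atTop (nhds L)

/-- The series `Σ_{n=0}^∞ f n` converges. -/
def SeriesConv (f : ℕ → ℝ) : Prop := ∃ L, SeriesTo f L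

/-! Every quadratic form of `Σ Bₙ xⁿ` is the scalar power series `Σ (vᵀ Bₙ v) xⁿ`, whose
coefficients are nonnegative when the `Bₙ` are positive semidefinite. Such a series is
nonnegative and nondecreasing on `x ≥ 0`, and `θ ↦ 1 + cos θ` maps `[0, π]` decreasingly
into `[0, 2]`; so `C` is positive semidefinite and decreasing in the Loewner order on
`[0, π]`, and the derivative of a decreasing function is nonpositive. -/

variable {m : ℕ}

lemma psd_sub_iff {A A' : Matrix (Fin m) (Fin m) ℝ} :
    PSD (A - A') ↔ ∀ v, v ⬝ᵥ A' *ᵥ v ≤ v ⬝ᵥ A *ᵥ v := by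
  simp only [PSD, sub_mulVec, dotProduct_sub, sub_nonneg]

lemma psd_neg_iff {A : Matrix (Fin m) (Fin m) ℝ} : PSD (-A) ↔ ∀ v, v ⬝ᵥ A *ᵥ v ≤ 0 := by
  simp only [PSD, neg_mulVec, dotProduct_neg, neg_nonneg]

lemma seriesTo_dotProduct_mulVec {A : ℕ → Matrix (Fin m) (Fin m) ℝ}
    {L : Matrix (Fin m) (Fin m) ℝ} {c : ℕ → ℝ}
    (h : ∀ i j, SeriesTo (fun n => A n i j * c n) (L i j)) (v : Fin m → ℝ) :
    SeriesTo (fun n => v ⬝ᵥ A n *ᵥ v * c n) (v ⬝ᵥ L *ᵥ v) := by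
  have hS : Tendsto (fun N => ∑ n ∈ Finset.range N, c n • A n) atTop (nhds L) :=
    tendsto_pi_nhds.2 fun i => tendsto_pi_nhds.2 fun j =>
      Tendsto.congr (fun N => by simp [Matrix.sum_apply, mul_comm]) (h i j)
  have hq : Continuous fun M : Matrix (Fin m) (Fin m) ℝ => v ⬝ᵥ M *ᵥ v := by fun_prop
  refine ((hq.tendsto L).comp hS).congr fun N => ?_
  simp [sum_mulVec, dotProduct_sum, smul_mulVec, dotProduct_smul, mul_comm]

section PowerSeries

variable {B : ℕ → Matrix (Fin m) (Fin m) ℝ} (hB : ∀ n, PSD (B n))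
include hB

lemma psd_of_seriesTo_pow {x : ℝ} {L : Matrix (Fin m) (Fin m) ℝ} (hx : 0 ≤ x)
    (hL : ∀ i j, SeriesTo (fun n => B n i j * x ^ n) (L i j)) : PSD L := fun v =>
  ge_of_tendsto' (seriesTo_dotProduct_mulVec hL v) fun _ =>
    Finset.sum_nonneg fun n _ => mul_nonneg (hB n v) (pow_nonneg hx n)

lemma psd_sub_of_seriesTo_pow {x y : ℝ} {L L' : Matrix (Fin m) (Fin m) ℝ}
    (hy : 0 ≤ y) (hyx : y ≤ x)
    (hL : ∀ i j, SeriesTo (fun n => B n i j * x ^ n) (L i j))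
    (hL' : ∀ i j, SeriesTo (fun n => B n i j * y ^ n) (L' i j)) : PSD (L - L') :=
  psd_sub_iff.2 fun v =>
    le_of_tendsto_of_tendsto' (seriesTo_dotProduct_mulVec hL' v)
      (seriesTo_dotProduct_mulVec hL v) fun _ =>
        Finset.sum_le_sum fun n _ =>
          mul_le_mul_of_nonneg_left (pow_le_pow_left₀ hy hyx n) (hB n v)

end PowerSeries

lemma hasDerivAt_dotProduct_mulVec {C : ℝ → Matrix (Fin m) (Fin m) ℝ}
    {D : Matrix (Fin m) (Fin m) ℝ} {θ : ℝ}
    (hD : ∀ i j, HasDerivAt (fun t => C t i j) (D i j) θ) (v : Fin m → ℝ) :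
    HasDerivAt (fun t => v ⬝ᵥ C t *ᵥ v) (v ⬝ᵥ D *ᵥ v) θ := by
  simp only [dotProduct, mulVec, Finset.mul_sum]
  exact HasDerivAt.fun_sum fun i _ => HasDerivAt.fun_sum fun j _ =>
    ((hD i j).mul_const (v j)).const_mul (v i)

lemma psd_neg_of_hasDerivAt_of_psd_sub {C : ℝ → Matrix (Fin m) (Fin m) ℝ}
    {D : Matrix (Fin m) (Fin m) ℝ} {s : Set ℝ} {θ : ℝ}
    (hanti : ∀ a ∈ s, ∀ b ∈ s, a ≤ b → PSD (C a - C b)) (hθ : AccPt θ (𝓟 s))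
    (hD : ∀ i j, HasDerivAt (fun t => C t i j) (D i j) θ) : PSD (-D) :=
  psd_neg_iff.2 fun v =>
    (hasDerivAt_dotProduct_mulVec hD v).hasDerivWithinAt.nonpos_of_antitoneOn hθ
      fun a ha b hb hab => psd_sub_iff.1 (hanti a ha b hb hab) v

theorem stmt16_general (m : ℕ)
    (C : ℝ → Matrix (Fin m) (Fin m) ℝ) (B : ℕ → Matrix (Fin m) (Fin m) ℝ)
    (hPSD : ∀ n, PSD (B n))
    (hrep : ∀ θ ∈ Set.Icc (0:ℝ) Real.pi, ∀ i j,
      SeriesTo (fun n => B n i j * (1 + Real.cos θ) ^ n) (C θ i j)) :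
    (∀ θ ∈ Set.Icc (0:ℝ) Real.pi, PSD (C θ)) ∧
    (∀ θ₁ θ₂ : ℝ, 0 ≤ θ₁ → θ₁ ≤ θ₂ → θ₂ ≤ Real.pi → PSD (C θ₁ - C θ₂)) ∧
    (∀ θ ∈ Set.Ioo (0:ℝ) Real.pi, ∀ D : Matrix (Fin m) (Fin m) ℝ,
      (∀ i j, HasDerivAt (fun t => C t i j) (D i j) θ) → PSD (-D)) := by
  have hcos (θ : ℝ) : 0 ≤ 1 + Real.cos θ := by linarith [Real.neg_one_le_cos θ]
  have hdecr (θ₁ θ₂ : ℝ) (h0 : 0 ≤ θ₁) (h12 : θ₁ ≤ θ₂) (h2π : θ₂ ≤ Real.pi) :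
      PSD (C θ₁ - C θ₂) :=
    psd_sub_of_seriesTo_pow hPSD (hcos θ₂)
      (by linarith [Real.cos_le_cos_of_nonneg_of_le_pi h0 h2π h12])
      (hrep θ₁ ⟨h0, h12.trans h2π⟩) (hrep θ₂ ⟨h0.trans h12, h2π⟩)
  refine ⟨fun θ hθ => psd_of_seriesTo_pow hPSD (hcos θ) (hrep θ hθ), hdecr, ?_⟩
  intro θ hθ D hD
  refine psd_neg_of_hasDerivAt_of_psd_sub (s := Set.Icc 0 Real.pi)
    (fun a ha b hb hab => hdecr a b ha.1 hab hb.2) ?_ hD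
  exact (uniqueDiffOn_Icc Real.pi_pos θ (Set.Ioo_subset_Icc_self hθ)).accPt

/-- Corollary 5: properties of an isotropic covariance matrix function on all
compact two-point homogeneous spaces. -/
theorem stmt16 (m : ℕ) (hm : 1 ≤ m)
    (C : ℝ → Matrix (Fin m) (Fin m) ℝ) (B : ℕ → Matrix (Fin m) (Fin m) ℝ)
    (hPSD : ∀ n, PSD (B n))
    (hconv : ∀ i j, SeriesConv fun n => (2 : ℝ) ^ n * B n i j)
    (hrep : ∀ θ ∈ Set.Icc (0:ℝ) Real.pi, ∀ i j,
      SeriesTo (fun n => B n i j * (1 + Real.cos θ) ^ n) (C θ i j)) :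
    (∀ θ ∈ Set.Icc (0:ℝ) Real.pi, PSD (C θ)) ∧
    (∀ θ₁ θ₂ : ℝ, 0 ≤ θ₁ → θ₁ ≤ θ₂ → θ₂ ≤ Real.pi → PSD (C θ₁ - C θ₂)) ∧
    (∀ θ ∈ Set.Ioo (0:ℝ) Real.pi, ∀ D : Matrix (Fin m) (Fin m) ℝ,
      (∀ i j, HasDerivAt (fun t => C t i j) (D i j) θ) → PSD (-D)) :=
  stmt16_general m C B hPSD hrep
end
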